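/- Let p > 2 and let (f_n) be a sequence in L²(ℝ^N) ∩ L^p(ℝ^N) and f ∈ L²(ℝ^N) ∩ L^p(ℝ^N) such that f_n → f in L²(ℝ^N), and suppose that for every η > 0 there exists M > 0 with sup_n ∫_{ {|f_n| ≥ M} } |f_n|^p dx ≤ η and ∫_{ {|f| ≥ M} } |f|^p dx ≤ η. Then f_n → f in L^p(ℝ^N). -/

import Mathlib

/-!
Split |f_n - f|^p according to whether both |f_n| and |f| stay below a level M. Where they do,
|f_n - f|^p ≤ (2M)^(p-2) |f_n - f|², whose integral tends to 0 by L² convergence; elsewhere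
|f_n - f| ≤ 2 max(|f_n|, |f|) and the larger value is at least M, so |f_n - f|^p is bounded by
2^p times the tails of |f_n|^p and |f|^p above M, which are uniformly small for M large.
-/

open MeasureTheory Filter Set Topology
open scoped ENNReal NNReal

namespace ENNReal

lemma rpow_le_two_rpow_mul_rpow {d x y : ℝ≥0∞} {p : ℝ} (hp : 0 ≤ p) (hd : d ≤ x + y)
    (hyx : y ≤ x) : d ^ p ≤ 2 ^ p * x ^ p := by
  rw [← mul_rpow_of_nonneg _ _ hp, two_mul]
  gcongr
  exact hd.trans (add_le_add_right hyx x)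

lemma tendsto_nhds_zero_of_forall_eventually_le_add {ι : Type*} {l : Filter ι} {I : ι → ℝ≥0∞}
    {c : ℝ≥0∞} (hc : c ≠ ∞)
    (h : ∀ η : ℝ≥0, 0 < η → ∃ A : ι → ℝ≥0∞, Tendsto A l (𝓝 0) ∧ ∀ᶠ i in l, I i ≤ A i + η * c) :
    Tendsto I l (𝓝 0) := by
  rw [ENNReal.tendsto_nhds_zero]
  intro ε hε
  have hε2 : 0 < ε / 2 := ENNReal.half_pos hε.ne'
  obtain ⟨η, hη, hηc⟩ := ENNReal.exists_nnreal_pos_mul_lt hc hε2.ne'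
  obtain ⟨A, hA, hIA⟩ := h η hη
  filter_upwards [hIA, ENNReal.tendsto_nhds_zero.1 hA _ hε2] with i hIi hAi
  calc I i ≤ A i + η * c := hIi
    _ ≤ ε / 2 + ε / 2 := add_le_add hAi hηc.le
    _ = ε := ENNReal.add_halves ε

end ENNReal

section

variable {α E : Type*} [MeasurableSpace α] {μ : Measure α} [NormedAddCommGroup E]

lemma enorm_sub_rpow_le {p : ℝ} (hp : 2 ≤ p) (M : ℝ≥0) (a b : E) :
    ‖a - b‖ₑ ^ p ≤ (2 * M : ℝ≥0∞) ^ (p - 2) * ‖a - b‖ₑ ^ (2 : ℝ) +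
      2 ^ p * ((if (M : ℝ≥0∞) ≤ ‖a‖ₑ then ‖a‖ₑ ^ p else 0) +
        (if (M : ℝ≥0∞) ≤ ‖b‖ₑ then ‖b‖ₑ ^ p else 0)) := by
  have hd : ‖a - b‖ₑ ≤ ‖a‖ₑ + ‖b‖ₑ := enorm_sub_le
  have hp0 : 0 ≤ p := by linarith
  by_cases ha : (M : ℝ≥0∞) ≤ ‖a‖ₑ <;> by_cases hb : (M : ℝ≥0∞) ≤ ‖b‖ₑ <;>
    simp only [ha, hb, if_true, if_false, add_zero, zero_add]
  · refine le_add_left ?_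
    rcases le_total ‖b‖ₑ ‖a‖ₑ with hba | hab
    · exact (ENNReal.rpow_le_two_rpow_mul_rpow hp0 hd hba).trans (by gcongr; exact le_self_add)
    · exact (ENNReal.rpow_le_two_rpow_mul_rpow hp0 (hd.trans_eq (add_comm _ _)) hab).trans
        (by gcongr; exact le_add_self)
  · exact le_add_left (ENNReal.rpow_le_two_rpow_mul_rpow hp0 hd ((not_le.1 hb).le.trans ha))
  · exact le_add_left (ENNReal.rpow_le_two_rpow_mul_rpow hp0 (hd.trans_eq (add_comm _ _))
      ((not_le.1 ha).le.trans hb))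
  · refine le_add_right ?_
    have hd' : ‖a - b‖ₑ ≤ 2 * M :=
      (hd.trans (add_le_add (not_le.1 ha).le (not_le.1 hb).le)).trans_eq (two_mul _).symm
    calc ‖a - b‖ₑ ^ p = ‖a - b‖ₑ ^ (p - 2) * ‖a - b‖ₑ ^ (2 : ℝ) := by
          rw [← ENNReal.rpow_add_of_nonneg _ _ (by linarith) (by norm_num), sub_add_cancel]
      _ ≤ (2 * M : ℝ≥0∞) ^ (p - 2) * ‖a - b‖ₑ ^ (2 : ℝ) := by gcongr

lemma lintegral_enorm_sub_rpow_le {p : ℝ} (hp : 2 ≤ p) (M : ℝ≥0) {f g : α → E}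
    (hf : AEStronglyMeasurable f μ) (hg : AEStronglyMeasurable g μ) :
    ∫⁻ x, ‖f x - g x‖ₑ ^ p ∂μ ≤ (2 * M : ℝ≥0∞) ^ (p - 2) * ∫⁻ x, ‖f x - g x‖ₑ ^ (2 : ℝ) ∂μ +
      2 ^ p * (∫⁻ x in {x | (M : ℝ≥0∞) ≤ ‖f x‖ₑ}, ‖f x‖ₑ ^ p ∂μ +
        ∫⁻ x in {x | (M : ℝ≥0∞) ≤ ‖g x‖ₑ}, ‖g x‖ₑ ^ p ∂μ) := by
  have hC : (2 * M : ℝ≥0∞) ^ (p - 2) ≠ ∞ :=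
    ENNReal.rpow_ne_top_of_nonneg (by linarith) (by finiteness)
  have h2p : (2 : ℝ≥0∞) ^ p ≠ ∞ := ENNReal.rpow_ne_top_of_nonneg (by linarith) (by simp)
  have hA : AEMeasurable (fun x => ‖f x - g x‖ₑ ^ (2 : ℝ)) μ := (hf.sub hg).enorm.pow_const _
  have hfM : NullMeasurableSet {x | (M : ℝ≥0∞) ≤ ‖f x‖ₑ} μ :=
    hf.enorm.nullMeasurable measurableSet_Ici
  calc ∫⁻ x, ‖f x - g x‖ₑ ^ p ∂μ
      ≤ ∫⁻ x, ((2 * M : ℝ≥0∞) ^ (p - 2) * ‖f x - g x‖ₑ ^ (2 : ℝ) +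
          2 ^ p * ({x | (M : ℝ≥0∞) ≤ ‖f x‖ₑ}.indicator (fun x => ‖f x‖ₑ ^ p) x +
            {x | (M : ℝ≥0∞) ≤ ‖g x‖ₑ}.indicator (fun x => ‖g x‖ₑ ^ p) x)) ∂μ := by
        refine lintegral_mono fun x => ?_
        simpa only [indicator_apply, mem_ofPred_eq] using enorm_sub_rpow_le hp M (f x) (g x)
    _ = (2 * M : ℝ≥0∞) ^ (p - 2) * ∫⁻ x, ‖f x - g x‖ₑ ^ (2 : ℝ) ∂μ +
          2 ^ p * (∫⁻ x, {x | (M : ℝ≥0∞) ≤ ‖f x‖ₑ}.indicator (fun x => ‖f x‖ₑ ^ p) x ∂μ +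
            ∫⁻ x, {x | (M : ℝ≥0∞) ≤ ‖g x‖ₑ}.indicator (fun x => ‖g x‖ₑ ^ p) x ∂μ) := by
        rw [lintegral_add_left' (hA.const_mul _), lintegral_const_mul' _ _ hC,
          lintegral_const_mul' _ _ h2p,
          lintegral_add_left' ((hf.enorm.pow_const p).indicator₀ hfM)]
    _ ≤ _ := by gcongr _ + _ * (?_ + ?_) <;> exact lintegral_indicator_le _ _

lemma tendsto_eLpNorm_ofReal_nhds_zero_iff {ι : Type*} {l : Filter ι} {p : ℝ} (hp : 0 < p)
    {u : ι → α → E} :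
    Tendsto (fun i => eLpNorm (u i) (ENNReal.ofReal p) μ) l (𝓝 0) ↔
      Tendsto (fun i => ∫⁻ x, ‖u i x‖ₑ ^ p ∂μ) l (𝓝 0) := by
  simp only [eLpNorm_eq_lintegral_rpow_enorm_toReal (ENNReal.ofReal_pos.2 hp).ne'
    ENNReal.ofReal_ne_top, ENNReal.toReal_ofReal hp.le]
  constructor
  · intro h
    simpa [Function.comp_def, ENNReal.rpow_inv_rpow hp.ne', ENNReal.zero_rpow_of_pos hp] using
      ((ENNReal.continuous_rpow_const (y := p)).tendsto 0).comp h
  · intro h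
    simpa [Function.comp_def, ENNReal.zero_rpow_of_pos (inv_pos.2 hp)] using
      ((ENNReal.continuous_rpow_const (y := 1 / p)).tendsto 0).comp h

lemma MeasureTheory.MemLp.lintegral_enorm_rpow_eq_ofReal_integral {p : ℝ} (hp : 0 < p)
    {u : α → E} (hu : MemLp u (ENNReal.ofReal p) μ) :
    ∫⁻ x, ‖u x‖ₑ ^ p ∂μ = ENNReal.ofReal (∫ x, ‖u x‖ ^ p ∂μ) := by
  have hint := hu.integrable_norm_rpow (ENNReal.ofReal_pos.2 hp).ne' ENNReal.ofReal_ne_top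
  rw [ENNReal.toReal_ofReal hp.le] at hint
  rw [ofReal_integral_eq_lintegral_ofReal hint (ae_of_all _ fun x => by positivity)]
  refine lintegral_congr fun x => ?_
  rw [← ENNReal.ofReal_rpow_of_nonneg (norm_nonneg _) hp.le, ofReal_norm]

theorem tendsto_eLpNorm_sub_of_tendsto_eLpNorm_two_sub_of_tails {ι : Type*} {l : Filter ι}
    {p : ℝ} (hp : 2 ≤ p) {f : ι → α → E} {g : α → E} (hf : ∀ i, AEStronglyMeasurable (f i) μ)
    (hg : AEStronglyMeasurable g μ) (hconv : Tendsto (fun i => eLpNorm (f i - g) 2 μ) l (𝓝 0))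
    (htails : ∀ η : ℝ≥0, 0 < η → ∃ M : ℝ≥0,
      (∀ i, ∫⁻ x in {x | (M : ℝ≥0∞) ≤ ‖f i x‖ₑ}, ‖f i x‖ₑ ^ p ∂μ ≤ η) ∧
        ∫⁻ x in {x | (M : ℝ≥0∞) ≤ ‖g x‖ₑ}, ‖g x‖ₑ ^ p ∂μ ≤ η) :
    Tendsto (fun i => eLpNorm (f i - g) (ENNReal.ofReal p) μ) l (𝓝 0) := by
  rw [tendsto_eLpNorm_ofReal_nhds_zero_iff (by linarith)]
  have hL2 : Tendsto (fun i => ∫⁻ x, ‖f i x - g x‖ₑ ^ (2 : ℝ) ∂μ) l (𝓝 0) := by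
    simpa using (tendsto_eLpNorm_ofReal_nhds_zero_iff (μ := μ) (u := fun i => f i - g)
      two_pos).1 (by simpa using hconv)
  refine ENNReal.tendsto_nhds_zero_of_forall_eventually_le_add (c := 2 ^ p * 2)
    (by finiteness) fun η hη => ?_
  obtain ⟨M, hfM, hgM⟩ := htails η hη
  refine ⟨fun i => (2 * M : ℝ≥0∞) ^ (p - 2) * ∫⁻ x, ‖f i x - g x‖ₑ ^ (2 : ℝ) ∂μ, ?_,
    Eventually.of_forall fun i => ?_⟩
  · simpa using ENNReal.Tendsto.const_mul hL2
      (Or.inr (ENNReal.rpow_ne_top_of_nonneg (by linarith) (by finiteness)))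
  · calc ∫⁻ x, ‖(f i - g) x‖ₑ ^ p ∂μ
        ≤ _ := lintegral_enorm_sub_rpow_le hp M (hf i) hg
      _ ≤ (2 * M : ℝ≥0∞) ^ (p - 2) * ∫⁻ x, ‖f i x - g x‖ₑ ^ (2 : ℝ) ∂μ + 2 ^ p * (η + η) :=
        by grw [hfM i, hgM]
      _ = _ := by ring

end

theorem asymptotic_a_priori_Lp_convergence_general {N : ℕ} (p : ℝ) (hp : 2 < p)
    (f : ℕ → EuclideanSpace ℝ (Fin N) → ℝ) (g : EuclideanSpace ℝ (Fin N) → ℝ)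
    (hfp : ∀ n, MemLp (f n) (ENNReal.ofReal p) (volume : Measure (EuclideanSpace ℝ (Fin N))))
    (hgp : MemLp g (ENNReal.ofReal p) (volume : Measure (EuclideanSpace ℝ (Fin N))))
    (hconv : Tendsto (fun n => eLpNorm (f n - g) 2 volume) atTop (nhds 0))
    (htails : ∀ η > 0, ∃ M > (0 : ℝ),
      (∀ n, ∫ x in {x | M ≤ |f n x|}, |f n x| ^ p ≤ η) ∧
      ∫ x in {x | M ≤ |g x|}, |g x| ^ p ≤ η) :
    Tendsto (fun n => eLpNorm (f n - g) (ENNReal.ofReal p) volume) atTop (nhds 0) := by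
  refine tendsto_eLpNorm_sub_of_tendsto_eLpNorm_two_sub_of_tails hp.le (fun n => (hfp n).1)
    hgp.1 hconv fun η hη => ?_
  obtain ⟨M, hM, hfM, hgM⟩ := htails η hη
  lift M to ℝ≥0 using hM.le
  have tail_le {u : EuclideanSpace ℝ (Fin N) → ℝ} (hu : MemLp u (ENNReal.ofReal p) volume)
      (h : ∫ x in {x | (M : ℝ) ≤ |u x|}, |u x| ^ p ≤ η) :
      ∫⁻ x in {x | (M : ℝ≥0∞) ≤ ‖u x‖ₑ}, ‖u x‖ₑ ^ p ≤ η := by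
    simp only [coe_le_enorm, ← NNReal.coe_le_coe, coe_nnnorm, Real.norm_eq_abs]
    rw [(hu.restrict _).lintegral_enorm_rpow_eq_ofReal_integral (by linarith),
      ← ENNReal.ofReal_coe_nnreal]
    simpa only [Real.norm_eq_abs] using ENNReal.ofReal_le_ofReal h
  exact ⟨M, fun n => tail_le (hfp n) (hfM n), tail_le hgp hgM⟩

theorem asymptotic_a_priori_Lp_convergence {N : ℕ} (p : ℝ) (hp : 2 < p)
    (f : ℕ → EuclideanSpace ℝ (Fin N) → ℝ) (g : EuclideanSpace ℝ (Fin N) → ℝ)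
    (hf2 : ∀ n, MemLp (f n) 2 (volume : Measure (EuclideanSpace ℝ (Fin N))))
    (hfp : ∀ n, MemLp (f n) (ENNReal.ofReal p) (volume : Measure (EuclideanSpace ℝ (Fin N))))
    (hg2 : MemLp g 2 (volume : Measure (EuclideanSpace ℝ (Fin N))))
    (hgp : MemLp g (ENNReal.ofReal p) (volume : Measure (EuclideanSpace ℝ (Fin N))))
    (hconv : Tendsto (fun n => eLpNorm (f n - g) 2 volume) atTop (nhds 0))
    (htails : ∀ η > 0, ∃ M > (0 : ℝ),
      (∀ n, ∫ x in {x | M ≤ |f n x|}, |f n x| ^ p ≤ η) ∧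
      ∫ x in {x | M ≤ |g x|}, |g x| ^ p ≤ η) :
    Tendsto (fun n => eLpNorm (f n - g) (ENNReal.ofReal p) volume) atTop (nhds 0) :=
  asymptotic_a_priori_Lp_convergence_general p hp f g hfp hgp hconv htails
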